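/- Let n ≥ 2 and let P = [2] × K_{n−1}, where K_{n−1} = [n−1] ⊕ ([1] ⊔ [1]) ⊕ [n−1]. Then the reverse operator 𝔛 acting on the lower sets of P has exactly n+2 orbits, each orbit has exactly 2n+1 elements, and each orbit contains exactly one lower set of cardinality 2n. -/

import Mathlib

/-!
A lower set of `[2] × K_{n-1}` is a pair `B ⊆ A` of lower sets of `K_{n-1}`, and these are the
rank truncations `L_j` (`0 ≤ j ≤ 2n-1`) and the two sets `I_n`, `I_{n′}`. Encode a pair
`(L_a, L_b)` by the two points `a + 1`, `b + 1` of `ℤ/(2n+1)`, with `0` in place of `b + 1` when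
`a = b`: then `𝔛` is the rotation by `1`, so these pairs form `n` orbits of size `2n+1`, one for
each distance `1, …, n` between the two points. The remaining pairs, which involve `I_n` or
`I_{n′}`, form two further orbits of size `2n+1`; along them the middle element that occurs
alternates between `n` and `n′` at every step but one. Finally `|A| + |B| = 2n` happens exactly once per
orbit: on a rotation orbit when the two points sum to `2n+1`, which has a unique solution because
`2n+1` is odd, and on the other two orbits at `(I, I)`.
-/

/-- The reverse operator `𝔛` on lower sets of a poset: the lower set generated by
the minimal elements of the complement. -/
def XRev {α : Type*} [PartialOrder α] (I : Set α) : Set α :=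
  {x | ∃ y, Minimal (fun z => z ∈ Iᶜ) y ∧ x ≤ y}

/-- The `𝔛`-orbit of a lower set `I` of a finite poset (forward iteration; since
`𝔛` is a bijection on lower sets of a finite poset, this is the full orbit). -/
def XOrbit {α : Type*} [PartialOrder α] (I : Set α) : Set (Set α) :=
  {J | ∃ k : ℕ, XRev^[k] I = J}

/-- The lower set of `[2] × P` corresponding to a pair `(I₁, I₂)` of lower sets
of `P` with `I₂ ⊆ I₁`: coordinate `0` (the bottom of the chain `[2]`) carries
`I₁` and coordinate `1` carries `I₂`. -/
def pairSet {β : Type*} (I₁ I₂ : Set β) : Set (Fin 2 × β) :=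
  {p | if p.1 = 0 then p.2 ∈ I₁ else p.2 ∈ I₂}

/-- The poset `K_{n-1} = [n-1] ⊕ ([1] ⊔ [1]) ⊕ [n-1]`, realized as pairs
`(rank, tag)` with `1 ≤ rank ≤ 2n-1`, where only rank `n` carries two elements
(tags `false` for `n` and `true` for `n′`). -/
def KType (n : ℕ) : Type :=
  {p : ℕ × Bool // 1 ≤ p.1 ∧ p.1 ≤ 2 * n - 1 ∧ (p.1 ≠ n → p.2 = false)}

/-- In `K_{n-1}`, `x ≤ y` iff `x = y` or `x` has strictly smaller rank. -/
instance (n : ℕ) : PartialOrder (KType n) where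
  le x y := x = y ∨ x.1.1 < y.1.1
  le_refl x := Or.inl rfl
  le_trans x y z hxy hyz := by
    rcases hxy with rfl | h
    · exact hyz
    · rcases hyz with rfl | h'
      · exact Or.inr h
      · exact Or.inr (h.trans h')
  le_antisymm x y hxy hyx := by
    rcases hxy with rfl | h
    · rfl
    · rcases hyx with rfl | h'
      · rfl
      · omega

/-- The rank-level lower set `L_j` of `K_{n-1}`. -/
def KL (n : ℕ) (j : ℕ) : Set (KType n) := {x | x.1.1 ≤ j}

/-- The lower set `I_n = {1, …, n-1, n}` of `K_{n-1}`. -/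
def KIn (n : ℕ) : Set (KType n) := {x | x.1.1 < n ∨ x.1 = (n, false)}

/-- The lower set `I_{n′} = {1, …, n-1, n′}` of `K_{n-1}`. -/
def KIn' (n : ℕ) : Set (KType n) := {x | x.1.1 < n ∨ x.1 = (n, true)}

theorem isLowerSet_XRev {α : Type*} [PartialOrder α] (I : Set α) : IsLowerSet (XRev I) := by
  rintro a b hba ⟨y, hy, hay⟩
  exact ⟨y, hy, hba.trans hay⟩

theorem mod_eq_ite {a m : ℕ} (h : a < 2 * m) : a % m = if a < m then a else a - m := by
  split_ifs with ha
  · exact Nat.mod_eq_of_lt ha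
  · rw [Nat.mod_eq_sub_mod (by omega), Nat.mod_eq_of_lt (by omega)]

theorem ne_add_mod {m a k : ℕ} (hk : k < m) (ha : 0 < a) (ham : a < m) : k ≠ (k + a) % m := by
  rw [mod_eq_ite (by omega)]
  split_ifs <;> omega

theorem mod_ne_add_add_one_mod {m : ℕ} (k : ℕ) {d : ℕ} (hd : d + 1 < m) :
    k % m ≠ (k + d + 1) % m := by
  rw [Nat.add_assoc, ← Nat.mod_add_mod]
  exact ne_add_mod (Nat.mod_lt _ (by omega)) (by omega) hd

section pairSet

variable {β : Type*} {A B A' B' : Set β}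

@[simp]
theorem zero_mem_pairSet {x : β} : ((0 : Fin 2), x) ∈ pairSet A B ↔ x ∈ A := by
  simp [pairSet]

@[simp]
theorem one_mem_pairSet {x : β} : ((1 : Fin 2), x) ∈ pairSet A B ↔ x ∈ B := by
  simp [pairSet]

theorem pairSet_inj : pairSet A B = pairSet A' B' ↔ A = A' ∧ B = B' := by
  refine ⟨fun h => ⟨Set.ext fun x => ?_, Set.ext fun x => ?_⟩, fun ⟨hA, hB⟩ => hA ▸ hB ▸ rfl⟩
  · simpa using congrArg (((0 : Fin 2), x) ∈ ·) h
  · simpa using congrArg (((1 : Fin 2), x) ∈ ·) h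

theorem pairSet_eq_union : pairSet A B = {0} ×ˢ A ∪ {1} ×ˢ B := by
  ext ⟨c, x⟩
  fin_cases c <;> simp

theorem ncard_pairSet [Finite β] : (pairSet A B).ncard = A.ncard + B.ncard := by
  rw [pairSet_eq_union, Set.ncard_union_eq, Set.ncard_prod, Set.ncard_prod]
  · simp
  · simp [Set.disjoint_left]

variable [PartialOrder β]

theorem IsLowerSet.exists_eq_pairSet {I : Set (Fin 2 × β)} (hI : IsLowerSet I) :
    ∃ A B : Set β, IsLowerSet A ∧ IsLowerSet B ∧ B ⊆ A ∧ I = pairSet A B := by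
  refine ⟨{x | (0, x) ∈ I}, {x | (1, x) ∈ I},
    fun _ _ hba ha => hI (Prod.mk_le_mk.mpr ⟨le_rfl, hba⟩) ha,
    fun _ _ hba ha => hI (Prod.mk_le_mk.mpr ⟨le_rfl, hba⟩) ha,
    fun _ hx => hI (Prod.mk_le_mk.mpr ⟨Fin.zero_le _, le_rfl⟩) hx, ?_⟩
  ext ⟨c, x⟩
  fin_cases c <;> simp

theorem minimal_compl_pairSet_zero {y : β} :
    Minimal (· ∈ (pairSet A B)ᶜ) ((0 : Fin 2), y) ↔ Minimal (· ∈ Aᶜ) y := by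
  constructor
  · rintro ⟨hy, hmin⟩
    exact ⟨by simpa using hy, fun z hz hzy =>
      (hmin (y := (0, z)) (by simpa using hz) ⟨le_rfl, hzy⟩).2⟩
  · rintro ⟨hy, hmin⟩
    refine ⟨by simpa using hy, ?_⟩
    rintro ⟨c, z⟩ hz hle
    obtain ⟨hc, hzy⟩ := Prod.mk_le_mk.mp hle
    obtain rfl : c = 0 := by omega
    exact ⟨le_rfl, hmin (by simpa using hz) hzy⟩

theorem minimal_compl_pairSet_one (hA : IsLowerSet A) {y : β} :
    Minimal (· ∈ (pairSet A B)ᶜ) ((1 : Fin 2), y) ↔ Minimal (· ∈ Bᶜ) y ∧ y ∈ A := by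
  constructor
  · rintro ⟨hy, hmin⟩
    have hyA : y ∈ A := by
      by_contra hyA
      have := (Prod.mk_le_mk.mp
        (hmin (y := (0, y)) (by simpa using hyA) (Prod.mk_le_mk.mpr ⟨Fin.zero_le _, le_rfl⟩))).1
      exact absurd this (by decide)
    exact ⟨⟨by simpa using hy, fun z hz hzy =>
      (hmin (y := (1, z)) (by simpa using hz) ⟨le_rfl, hzy⟩).2⟩, hyA⟩
  · rintro ⟨⟨hy, hmin⟩, hyA⟩
    refine ⟨by simpa using hy, ?_⟩
    rintro ⟨c, z⟩ hz hle
    obtain ⟨-, hzy⟩ := Prod.mk_le_mk.mp hle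
    fin_cases c
    · exact absurd (hA hzy hyA) (by simpa using hz)
    · exact ⟨le_rfl, hmin (by simpa using hz) hzy⟩

theorem XRev_pairSet (hA : IsLowerSet A) :
    XRev (pairSet A B) =
      pairSet (XRev A ∪ {x | ∃ y, Minimal (· ∈ Bᶜ) y ∧ y ∈ A ∧ x ≤ y})
        {x | ∃ y, Minimal (· ∈ Bᶜ) y ∧ y ∈ A ∧ x ≤ y} := by
  ext ⟨c, x⟩
  fin_cases c
  · simp only [Fin.zero_eta, zero_mem_pairSet]
    constructor
    · rintro ⟨⟨d, y⟩, hmin, hc⟩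
      have hxy := (Prod.mk_le_mk.mp hc).2
      fin_cases d
      · exact Or.inl ⟨y, minimal_compl_pairSet_zero.mp hmin, hxy⟩
      · obtain ⟨hy, hyA⟩ := (minimal_compl_pairSet_one hA).mp hmin
        exact Or.inr ⟨y, hy, hyA, hxy⟩
    · rintro (⟨y, hy, hxy⟩ | ⟨y, hy, hyA, hxy⟩)
      · exact ⟨(0, y), minimal_compl_pairSet_zero.mpr hy, Prod.mk_le_mk.mpr ⟨le_rfl, hxy⟩⟩
      · exact ⟨(1, y), (minimal_compl_pairSet_one hA).mpr ⟨hy, hyA⟩,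
          Prod.mk_le_mk.mpr ⟨Fin.zero_le _, hxy⟩⟩
  · simp only [Fin.mk_one, one_mem_pairSet]
    constructor
    · rintro ⟨⟨d, y⟩, hmin, hc⟩
      have hxy := (Prod.mk_le_mk.mp hc).2
      fin_cases d
      · exact absurd (Prod.mk_le_mk.mp hc).1 (by decide)
      · obtain ⟨hy, hyA⟩ := (minimal_compl_pairSet_one hA).mp hmin
        exact ⟨y, hy, hyA, hxy⟩
    · rintro ⟨y, hy, hyA, hxy⟩
      exact ⟨(1, y), (minimal_compl_pairSet_one hA).mpr ⟨hy, hyA⟩, Prod.mk_le_mk.mpr ⟨le_rfl, hxy⟩⟩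

theorem XRev_pairSet_of_minimal_mem (hA : IsLowerSet A) (h : ∀ y, Minimal (· ∈ Bᶜ) y → y ∈ A) :
    XRev (pairSet A B) = pairSet (XRev A ∪ XRev B) (XRev B) := by
  have hD : {x | ∃ y, Minimal (· ∈ Bᶜ) y ∧ y ∈ A ∧ x ≤ y} = XRev B := by
    ext x
    exact ⟨fun ⟨y, hy, _, hxy⟩ => ⟨y, hy, hxy⟩, fun ⟨y, hy, hxy⟩ => ⟨y, hy, h y hy, hxy⟩⟩
  rw [XRev_pairSet hA, hD]

theorem XRev_pairSet_self (hA : IsLowerSet A) : XRev (pairSet A A) = pairSet (XRev A) ∅ := by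
  have hD : {x | ∃ y, Minimal (· ∈ Aᶜ) y ∧ y ∈ A ∧ x ≤ y} = ∅ :=
    Set.eq_empty_of_forall_notMem fun _ ⟨_, hy, hyA, _⟩ => hy.1 hyA
  rw [XRev_pairSet hA, hD, Set.union_empty]

end pairSet

/-- `KN n false = KIn n` and `KN n true = KIn' n`; indexing by the tag lets `𝔛` act
as `t ↦ !t`. -/
def KN (n : ℕ) (t : Bool) : Set (KType n) := {x | x.1.1 < n ∨ x.1 = (n, t)}

namespace KType

variable {n : ℕ}

theorem rank_le_rank {x y : KType n} (h : x ≤ y) : x.1.1 ≤ y.1.1 := by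
  rcases h with rfl | h <;> omega

theorem one_le_rank (x : KType n) : 1 ≤ x.1.1 := x.2.1

theorem rank_le (x : KType n) : x.1.1 ≤ 2 * n - 1 := x.2.2.1

theorem ext_of_rank_ne {x y : KType n} (h : x.1.1 = y.1.1) (hx : x.1.1 ≠ n) : x = y :=
  Subtype.ext (Prod.ext h (by rw [x.2.2.2 hx, y.2.2.2 (h ▸ hx)]))

theorem val_eq_of_rank_eq {x : KType n} (hx : x.1.1 = n) : x.1 = (n, x.1.2) :=
  Prod.ext hx rfl

def ofRank (r : ℕ) (h₁ : 1 ≤ r) (h₂ : r ≤ 2 * n - 1) : KType n :=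
  ⟨(r, false), h₁, h₂, fun _ => rfl⟩

def mid (hn : 0 < n) (t : Bool) : KType n := ⟨(n, t), hn, by omega, fun h => absurd rfl h⟩

theorem eq_mid_of_rank_eq (hn : 0 < n) {x : KType n} (hx : x.1.1 = n) : x = mid hn x.1.2 :=
  Subtype.ext (val_eq_of_rank_eq hx)

theorem minimal_iff {S : Set (KType n)} {y : KType n} :
    Minimal (· ∈ S) y ↔ y ∈ S ∧ ∀ z ∈ S, y.1.1 ≤ z.1.1 := by
  refine ⟨fun ⟨hy, hmin⟩ => ⟨hy, fun z hz => ?_⟩, fun ⟨hy, hmin⟩ => ⟨hy, fun z hz hzy => ?_⟩⟩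
  · by_contra hlt
    exact absurd (rank_le_rank (hmin hz (Or.inr (by omega)))) (by omega)
  · rcases hzy with rfl | h
    · exact le_rfl
    · exact absurd (hmin z hz) (by omega)

theorem exists_rank_eq_le {z : KType n} {r : ℕ} (hr : r ≤ 2 * n - 1) (hz : z.1.1 ≤ r) :
    ∃ y : KType n, y.1.1 = r ∧ z ≤ y := by
  rcases hz.eq_or_lt with h | h
  · exact ⟨z, h, le_rfl⟩
  · exact ⟨ofRank r (by have := one_le_rank z; omega) hr, rfl, Or.inr h⟩

end KType

section KLowerSets

open KType

variable {n j : ℕ} {t : Bool}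

theorem mem_KL {x : KType n} : x ∈ KL n j ↔ x.1.1 ≤ j := Iff.rfl

theorem mem_KN {x : KType n} : x ∈ KN n t ↔ x.1.1 < n ∨ x.1 = (n, t) := Iff.rfl

theorem mid_mem_KN (hn : 0 < n) : mid hn t ∈ KN n t := Or.inr rfl

theorem isLowerSet_KL : IsLowerSet (KL n j) :=
  fun _ _ hba ha => (rank_le_rank hba).trans ha

theorem isLowerSet_KN : IsLowerSet (KN n t) := by
  rintro a b (rfl | h) ha
  · exact ha
  · rcases ha with ha | ha
    · exact Or.inl (h.trans ha)
    · exact Or.inl (by rw [ha] at h; exact h)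

theorem KL_zero : KL n 0 = ∅ :=
  Set.eq_empty_of_forall_notMem fun x hx => by have := one_le_rank x; simp [mem_KL] at hx; omega

theorem KL_top : KL n (2 * n - 1) = Set.univ :=
  Set.eq_univ_of_forall rank_le

theorem KL_subset_KL {i : ℕ} (h : i ≤ j) : KL n i ⊆ KL n j :=
  fun _ hx => le_trans hx h

theorem KL_subset_KN (h : j < n) : KL n j ⊆ KN n t :=
  fun _ hx => Or.inl (lt_of_le_of_lt hx h)

theorem KN_subset_KL (h : n ≤ j) : KN n t ⊆ KL n j := by
  rintro x (hx | hx)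
  · exact (show x.1.1 ≤ j by omega)
  · exact (show x.1.1 ≤ j by rw [hx]; exact h)

theorem KN_union_KN_not : KN n (!t) ∪ KN n t = KL n n := by
  ext x
  simp only [Set.mem_union, mem_KN, mem_KL]
  constructor
  · rintro ((h | h) | (h | h)) <;> simp_all [Prod.ext_iff] <;> omega
  · intro hx
    rcases hx.lt_or_eq with h | h
    · exact Or.inl (Or.inl h)
    · rw [val_eq_of_rank_eq h]
      cases x.1.2 <;> cases t <;> simp

theorem minimal_compl_KL {y : KType n} (hj : j < 2 * n - 1) :
    Minimal (· ∈ (KL n j)ᶜ) y ↔ y.1.1 = j + 1 := by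
  rw [minimal_iff]
  simp only [Set.mem_compl_iff, mem_KL, not_le]
  refine ⟨fun ⟨hy, hmin⟩ => ?_, fun hy => ⟨by omega, fun z hz => by omega⟩⟩
  have := hmin (ofRank (j + 1) (by omega) (by omega)) (by simp [ofRank])
  simp only [ofRank] at this
  omega

theorem minimal_compl_KN (hn : 0 < n) {y : KType n} :
    Minimal (· ∈ (KN n t)ᶜ) y ↔ y.1 = (n, !t) := by
  rw [minimal_iff]
  simp only [Set.mem_compl_iff, mem_KN, not_or, not_lt]
  constructor
  · rintro ⟨⟨hy, hyt⟩, hmin⟩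
    have := hmin (mid hn !t) ⟨le_rfl, by simp [mid]⟩
    have hr : y.1.1 = n := by simp only [mid] at this; omega
    rw [val_eq_of_rank_eq hr] at hyt ⊢
    cases h : y.1.2 <;> cases t <;> simp_all
  · intro hy
    rw [hy]
    refine ⟨⟨le_rfl, by cases t <;> simp⟩, fun z ⟨hz, _⟩ => hz⟩

theorem XRev_KL (hj : j < 2 * n - 1) : XRev (KL n j) = KL n (j + 1) := by
  ext x
  simp only [XRev, Set.mem_ofPred_eq, minimal_compl_KL hj, mem_KL]
  constructor
  · rintro ⟨y, hy, hxy⟩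
    exact hy ▸ rank_le_rank hxy
  · intro hx
    obtain ⟨y, hy, hxy⟩ := exists_rank_eq_le (by omega) hx
    exact ⟨y, hy, hxy⟩

theorem XRev_KL_top : XRev (KL n (2 * n - 1)) = ∅ := by
  rw [KL_top]
  exact Set.eq_empty_of_forall_notMem fun _ ⟨_, hy, _⟩ => hy.1 trivial

theorem XRev_KN (hn : 0 < n) : XRev (KN n t) = KN n (!t) := by
  ext x
  simp only [XRev, Set.mem_ofPred_eq, minimal_compl_KN hn, mem_KN]
  constructor
  · rintro ⟨y, hy, (rfl | h)⟩
    · exact Or.inr hy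
    · exact Or.inl (by rw [hy] at h; exact h)
  · rintro (h | h)
    · exact ⟨mid hn !t, rfl, Or.inr h⟩
    · exact ⟨x, h, le_rfl⟩

instance : Finite (KType n) :=
  Set.Finite.to_subtype <| ((Set.finite_Iic (2 * n - 1)).prod (Set.finite_univ (α := Bool))).subset
    fun _ hp => ⟨hp.2.1, trivial⟩

theorem ncard_rank_eq {r : ℕ} (h₁ : 1 ≤ r) (h₂ : r ≤ 2 * n - 1) :
    {x : KType n | x.1.1 = r}.ncard = if r = n then 2 else 1 := by
  split_ifs with hr
  · subst hr
    have hpair : {x : KType r | x.1.1 = r} = {mid h₁ false, mid h₁ true} := by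
      ext x
      simp only [Set.mem_ofPred_eq, Set.mem_insert_iff, Set.mem_singleton_iff]
      refine ⟨fun hx => ?_, by rintro (rfl | rfl) <;> rfl⟩
      cases h : x.1.2
      · exact Or.inl (Subtype.ext ((val_eq_of_rank_eq hx).trans (by rw [h]; rfl)))
      · exact Or.inr (Subtype.ext ((val_eq_of_rank_eq hx).trans (by rw [h]; rfl)))
    rw [hpair, Set.ncard_pair fun h => Bool.false_ne_true (congrArg (·.1.2) h)]
  · rw [Set.ncard_eq_one]
    exact ⟨ofRank r h₁ h₂, Set.ext fun x =>
      ⟨fun hx => ext_of_rank_ne hx (by rw [show x.1.1 = r from hx]; exact hr),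
        fun hx => hx ▸ rfl⟩⟩

theorem ncard_KL (hn : 0 < n) (hj : j ≤ 2 * n - 1) :
    (KL n j).ncard = if j < n then j else j + 1 := by
  induction j with
  | zero => simp [KL_zero, hn.ne']
  | succ j ih =>
    have hsplit : KL n (j + 1) = KL n j ∪ {x | x.1.1 = j + 1} := by
      ext x
      simp only [Set.mem_union, mem_KL, Set.mem_ofPred_eq]
      omega
    have hdisj : Disjoint (KL n j) {x | x.1.1 = j + 1} :=
      Set.disjoint_left.mpr fun x (hx : x.1.1 ≤ j) (hx' : x.1.1 = j + 1) => by omega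
    rw [hsplit, Set.ncard_union_eq hdisj, ih (by omega), ncard_rank_eq (by omega) hj]
    split_ifs <;> omega

theorem ncard_KN (hn : 0 < n) : (KN n t).ncard = n := by
  have hsplit : KN n t = KL n (n - 1) ∪ {mid hn t} := by
    ext x
    constructor
    · rintro (h | h)
      · exact Or.inl (show x.1.1 ≤ n - 1 by omega)
      · exact Or.inr (Subtype.ext h)
    · rintro (h | h)
      · exact Or.inl (show x.1.1 < n by have : x.1.1 ≤ n - 1 := h; omega)
      · exact Or.inr (by rw [h]; rfl)
  have hdisj : Disjoint (KL n (n - 1)) {mid hn t} :=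
    Set.disjoint_singleton_right.mpr fun h => by have : n ≤ n - 1 := h; omega
  rw [hsplit, Set.ncard_union_eq hdisj, ncard_KL hn (by omega),
    Set.ncard_singleton, if_pos (by omega)]
  omega

theorem KL_injOn (hn : 0 < n) {j' : ℕ} (hj : j ≤ 2 * n - 1) (hj' : j' ≤ 2 * n - 1)
    (h : KL n j = KL n j') : j = j' := by
  have := congrArg Set.ncard h
  rw [ncard_KL hn hj, ncard_KL hn hj'] at this
  split_ifs at this <;> omega

theorem KL_ne_KN (hn : 0 < n) (hj : j ≤ 2 * n - 1) : KL n j ≠ KN n t := fun h => by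
  have := congrArg Set.ncard h
  rw [ncard_KL hn hj, ncard_KN hn] at this
  split_ifs at this <;> omega

theorem le_of_KL_subset_KL (hn : 0 < n) {j' : ℕ} (hj : j ≤ 2 * n - 1) (hj' : j' ≤ 2 * n - 1)
    (h : KL n j ⊆ KL n j') : j ≤ j' := by
  have := Set.ncard_le_ncard h
  rw [ncard_KL hn hj, ncard_KL hn hj'] at this
  split_ifs at this <;> omega

theorem lt_of_KL_subset_KN (hn : 0 < n) (hj : j ≤ 2 * n - 1) (h : KL n j ⊆ KN n t) : j < n := by
  have := Set.ncard_le_ncard h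
  rw [ncard_KL hn hj, ncard_KN hn] at this
  split_ifs at this <;> omega

theorem le_of_KN_subset_KL (hn : 0 < n) (h : KN n t ⊆ KL n j) : n ≤ j :=
  h (mid_mem_KN hn)

theorem eq_of_KN_subset_KN (hn : 0 < n) {t' : Bool} (h : KN n t ⊆ KN n t') : t = t' := by
  rcases h (mid_mem_KN hn) with h' | h'
  · exact absurd h' (lt_irrefl n)
  · exact congrArg Prod.snd h'

theorem KN_injective (hn : 0 < n) {t' : Bool} (h : KN n t = KN n t') : t = t' :=
  eq_of_KN_subset_KN hn h.le

theorem IsLowerSet.eq_KL_or_eq_KN (hn : 0 < n) {A : Set (KType n)} (hA : IsLowerSet A) :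
    (∃ j ≤ 2 * n - 1, A = KL n j) ∨ ∃ t, A = KN n t := by
  classical
  have hex : ∃ j, A ⊆ KL n j := ⟨2 * n - 1, fun x _ => rank_le x⟩
  obtain ⟨j, hAj, hj, hmin⟩ : ∃ j, A ⊆ KL n j ∧ j ≤ 2 * n - 1 ∧ ∀ j' < j, ¬A ⊆ KL n j' :=
    ⟨_, Nat.find_spec hex, Nat.find_min' hex fun x _ => rank_le x, fun _ => Nat.find_min hex⟩
  rcases Nat.eq_zero_or_pos j with rfl | hj0
  · rw [KL_zero] at hAj
    exact Or.inl ⟨0, by omega, by rw [KL_zero]; exact Set.subset_empty_iff.mp hAj⟩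
  obtain ⟨x, hxA, hxj⟩ : ∃ x ∈ A, x.1.1 = j := by
    obtain ⟨x, hxA, hx⟩ := Set.not_subset.mp (hmin (j - 1) (by omega))
    exact ⟨x, hxA, by have := hAj hxA; simp only [mem_KL] at hx this; omega⟩
  have hbelow : ∀ y : KType n, y.1.1 < j → y ∈ A := fun y hy => hA (Or.inr (hxj ▸ hy)) hxA
  by_cases hmid : j = n ∧ ∃ t, mid hn t ∉ A
  · obtain ⟨hjn, t, ht⟩ := hmid
    rw [hjn] at hAj hbelow hxj
    have hx : x = mid hn !t := by
      rw [eq_mid_of_rank_eq hn hxj] at hxA ⊢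
      cases h : x.1.2 <;> cases t <;> simp_all
    refine Or.inr ⟨!t, Set.ext fun y => ⟨fun hy => ?_, ?_⟩⟩
    · rcases (show y.1.1 ≤ n from hAj hy).lt_or_eq with h | h
      · exact Or.inl h
      · rw [eq_mid_of_rank_eq hn h] at hy ⊢
        cases h' : y.1.2 <;> cases t <;> simp_all [mid_mem_KN]
    · rintro (h | h)
      · exact hbelow y h
      · exact (show y = mid hn !t from Subtype.ext h) ▸ hx ▸ hxA
  · refine Or.inl ⟨j, hj, hAj.antisymm fun y hy => ?_⟩
    rcases (show y.1.1 ≤ j from hy).lt_or_eq with h | h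
    · exact hbelow y h
    · by_cases hjn : j = n
      · by_contra hyA
        exact hmid ⟨hjn, y.1.2, eq_mid_of_rank_eq hn (h.trans hjn) ▸ hyA⟩
      · exact ext_of_rank_ne (h.trans hxj.symm) (h ▸ hjn) ▸ hxA

theorem XRev_pairSet_KN_KL (hn : 0 < n) :
    XRev (pairSet (KN n t) (KL n (n - 1))) = pairSet (KL n n) (KN n t) := by
  have hD : {x | ∃ y, Minimal (· ∈ (KL n (n - 1))ᶜ) y ∧ y ∈ KN n t ∧ x ≤ y} = KN n t := by
    ext x
    simp only [minimal_compl_KL (show n - 1 < 2 * n - 1 by omega), Set.mem_ofPred_eq]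
    constructor
    · rintro ⟨y, hy, hyt, hxy⟩
      exact isLowerSet_KN hxy hyt
    · intro hx
      refine ⟨mid hn t, by simp only [mid]; omega, mid_mem_KN hn, ?_⟩
      rcases hx with hx | hx
      · exact Or.inr hx
      · exact Or.inl (Subtype.ext hx)
  rw [XRev_pairSet isLowerSet_KN, hD, XRev_KN hn, KN_union_KN_not]

/-- `chainSet n x y` encodes the lower set `(L_a, L_b)` of `[2] × K_{n-1}` by the two-point set
`{x, y} ⊆ ℤ/(2n+1)`: the larger point is `a + 1`, the smaller one is `b + 1`, except that the
point `0` stands for `b = a`. In this encoding `𝔛` is the rotation `z ↦ z + 1`. -/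
def chainSet (n x y : ℕ) : Set (Fin 2 × KType n) :=
  pairSet (KL n (max x y - 1)) (KL n (if min x y = 0 then max x y - 1 else min x y - 1))

theorem chainSet_comm (x y : ℕ) : chainSet n x y = chainSet n y x := by
  simp only [chainSet, max_comm, min_comm]

theorem chainSet_zero_left (y : ℕ) : chainSet n 0 y = pairSet (KL n (y - 1)) (KL n (y - 1)) := by
  simp [chainSet]

theorem chainSet_of_pos_of_lt {x y : ℕ} (hx : 0 < x) (h : x < y) :
    chainSet n x y = pairSet (KL n (y - 1)) (KL n (x - 1)) := by
  simp [chainSet, max_eq_right h.le, min_eq_left h.le, hx.ne']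

theorem XRev_chainSet_of_lt (hn : 0 < n) {x y : ℕ} (hxy : x < y) (hy : y ≤ 2 * n) :
    XRev (chainSet n x y) =
      if y = 2 * n then chainSet n 0 (x + 1) else chainSet n (x + 1) (y + 1) := by
  have hA : XRev (KL n (y - 1)) = if y = 2 * n then ∅ else KL n y := by
    split_ifs with h
    · rw [h, XRev_KL_top]
    · rw [XRev_KL (by omega), Nat.sub_add_cancel (by omega)]
  rcases Nat.eq_zero_or_pos x with rfl | hx
  · rw [chainSet_zero_left, XRev_pairSet_self isLowerSet_KL, hA, ← KL_zero]
    split_ifs with h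
    · rw [chainSet_zero_left]
    · rw [zero_add, chainSet_of_pos_of_lt one_pos (by omega), Nat.add_sub_cancel, Nat.sub_self]
  · have hB : XRev (KL n (x - 1)) = KL n x := by
      rw [XRev_KL (by omega), Nat.sub_add_cancel hx]
    rw [chainSet_of_pos_of_lt hx hxy, XRev_pairSet_of_minimal_mem isLowerSet_KL, hA, hB]
    · split_ifs with h
      · rw [Set.empty_union, chainSet_zero_left, Nat.add_sub_cancel]
      · rw [Set.union_eq_left.mpr (KL_subset_KL hxy.le),
          chainSet_of_pos_of_lt (by omega) (by omega), Nat.add_sub_cancel, Nat.add_sub_cancel]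
    · intro z hz
      rw [minimal_compl_KL (by omega)] at hz
      exact (show z.1.1 ≤ y - 1 by omega)

theorem XRev_chainSet (hn : 0 < n) {x y : ℕ} (hx : x < 2 * n + 1) (hy : y < 2 * n + 1)
    (hxy : x ≠ y) :
    XRev (chainSet n x y) = chainSet n ((x + 1) % (2 * n + 1)) ((y + 1) % (2 * n + 1)) := by
  wlog h : x < y generalizing x y
  · rw [chainSet_comm, this hy hx hxy.symm (by omega), chainSet_comm]
  rw [XRev_chainSet_of_lt hn h (by omega), Nat.mod_eq_of_lt (show x + 1 < 2 * n + 1 by omega)]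
  split_ifs with hy'
  · rw [hy', Nat.mod_self, chainSet_comm]
  · rw [Nat.mod_eq_of_lt (show y + 1 < 2 * n + 1 by omega)]

def parityTag (s : Bool) (r : ℕ) : Bool := if r % 2 = 0 then s else !s

theorem parityTag_succ (s : Bool) (r : ℕ) : parityTag s (r + 1) = !parityTag s r := by
  simp only [parityTag]
  split_ifs <;> simp <;> omega

theorem parityTag_parityTag (s : Bool) (r : ℕ) : parityTag (parityTag s r) r = s := by
  simp only [parityTag]
  split_ifs <;> simp

theorem parityTag_inj {s s' : Bool} {r : ℕ} : parityTag s r = parityTag s' r ↔ s = s' := by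
  simp only [parityTag]
  split_ifs <;> simp

/-- Time `r ≤ 2n` of the `𝔛`-orbit of `(KN n s, ∅)`: these are the lower sets one of whose two
layers is `I_n` or `I_{n′}`. -/
def NSet (n : ℕ) (s : Bool) (r : ℕ) : Set (Fin 2 × KType n) :=
  if r < n then pairSet (KN n (parityTag s r)) (KL n r)
  else if r < 2 * n then pairSet (KL n r) (KN n !parityTag s r)
  else pairSet (KN n !s) (KN n !s)

theorem XRev_NSet (hn : 0 < n) (s : Bool) {r : ℕ} (hr : r < 2 * n + 1) :
    XRev (NSet n s r) = NSet n s ((r + 1) % (2 * n + 1)) := by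
  rcases (show r + 1 < n ∨ r + 1 = n ∨ (n ≤ r ∧ r + 1 < 2 * n) ∨ r + 1 = 2 * n ∨ r = 2 * n by
    omega) with h | h | h | h | h
  · rw [Nat.mod_eq_of_lt (by omega)]
    simp only [NSet, if_pos h, if_pos (show r < n by omega)]
    rw [XRev_pairSet_of_minimal_mem isLowerSet_KN, XRev_KN hn, XRev_KL (by omega),
      Set.union_eq_left.mpr (KL_subset_KN h), parityTag_succ]
    intro y hy
    rw [minimal_compl_KL (by omega)] at hy
    exact Or.inl (by omega)
  · rw [Nat.mod_eq_of_lt (by omega)]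
    simp only [NSet, if_pos (show r < n by omega), h, lt_irrefl, if_false,
      if_pos (show n < 2 * n by omega)]
    rw [show r = n - 1 by omega, XRev_pairSet_KN_KL hn, ← parityTag_succ,
      show n + 1 = n - 1 + 1 + 1 by omega, parityTag_succ, parityTag_succ, Bool.not_not]
  · rw [Nat.mod_eq_of_lt (by omega)]
    simp only [NSet, if_neg (show ¬r < n by omega), if_neg (show ¬r + 1 < n by omega),
      if_pos (show r < 2 * n by omega), if_pos h.2]
    rw [XRev_pairSet_of_minimal_mem isLowerSet_KL, XRev_KN hn, XRev_KL (by omega),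
      Set.union_eq_left.mpr (KN_subset_KL (by omega)), parityTag_succ]
    intro y hy
    rw [minimal_compl_KN hn] at hy
    exact (show y.1.1 ≤ r by rw [hy]; exact h.1)
  · rw [Nat.mod_eq_of_lt (by omega)]
    simp only [NSet, if_neg (show ¬r < n by omega), if_neg (show ¬r + 1 < n by omega),
      if_pos (show r < 2 * n by omega), if_neg (show ¬r + 1 < 2 * n by omega)]
    have hodd : parityTag s r = !s := by simp only [parityTag]; split_ifs <;> first | rfl | omega
    rw [hodd, Bool.not_not, show r = 2 * n - 1 by omega,
      XRev_pairSet_of_minimal_mem isLowerSet_KL, XRev_KN hn, XRev_KL_top, Set.empty_union]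
    intro y _
    exact rank_le y
  · rw [h, Nat.mod_self]
    simp only [NSet, if_neg (show ¬2 * n < n by omega), lt_irrefl, if_false, if_pos hn]
    rw [XRev_pairSet_self isLowerSet_KN, XRev_KN hn, Bool.not_not, ← KL_zero]
    simp [parityTag]

/-- The `𝔛`-orbits of `[2] × K_{n-1}`, parametrized by time `k` modulo `2n+1`: for `d : Fin n`
the rotation orbit of the two-point sets at distance `d + 1`, and for `s : Bool` an orbit of
`NSet`. -/
def orbitState (n : ℕ) : Fin n ⊕ Bool → ℕ → Set (Fin 2 × KType n)
  | .inl d, k => chainSet n (k % (2 * n + 1)) ((k + d + 1) % (2 * n + 1))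
  | .inr s, k => NSet n s (k % (2 * n + 1))

theorem orbitState_mod (o : Fin n ⊕ Bool) (k : ℕ) :
    orbitState n o (k % (2 * n + 1)) = orbitState n o k := by
  cases o <;> simp [orbitState, Nat.add_assoc, Nat.mod_add_mod]

theorem XRev_orbitState (hn : 0 < n) (o : Fin n ⊕ Bool) (k : ℕ) :
    XRev (orbitState n o k) = orbitState n o (k + 1) := by
  have hm : 0 < 2 * n + 1 := by omega
  cases o with
  | inl d =>
    simp only [orbitState]
    rw [XRev_chainSet hn (Nat.mod_lt _ hm) (Nat.mod_lt _ hm)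
      (mod_ne_add_add_one_mod k (by omega)),
      Nat.mod_add_mod, Nat.mod_add_mod, Nat.add_right_comm k 1]
  | inr s =>
    simp only [orbitState]
    rw [XRev_NSet hn s (Nat.mod_lt _ hm), Nat.mod_add_mod]

theorem iterate_XRev_orbitState (hn : 0 < n) (o : Fin n ⊕ Bool) (k j : ℕ) :
    XRev^[j] (orbitState n o k) = orbitState n o (k + j) := by
  induction j with
  | zero => rfl
  | succ j ih => rw [Function.iterate_succ_apply', ih, XRev_orbitState hn, Nat.add_assoc]

theorem XOrbit_orbitState (hn : 0 < n) (o : Fin n ⊕ Bool) (k : ℕ) :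
    XOrbit (orbitState n o k) = Set.range (orbitState n o) := by
  ext J
  constructor
  · rintro ⟨j, rfl⟩
    exact ⟨k + j, (iterate_XRev_orbitState hn o k j).symm⟩
  · rintro ⟨i, rfl⟩
    refine ⟨2 * n * k + i, ?_⟩
    rw [iterate_XRev_orbitState hn, ← orbitState_mod,
      show k + (2 * n * k + i) = (2 * n + 1) * k + i by ring, Nat.mul_add_mod, orbitState_mod]

theorem isLowerSet_orbitState (hn : 0 < n) (o : Fin n ⊕ Bool) (k : ℕ) :
    IsLowerSet (orbitState n o k) := by
  have := isLowerSet_XRev (orbitState n o (k + 2 * n))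
  rwa [XRev_orbitState hn, ← orbitState_mod, Nat.add_assoc, Nat.add_mod_right,
    orbitState_mod] at this

theorem exists_orbitState_eq_chainSet {x y : ℕ} (hxy : x < y) (hy : y < 2 * n + 1) :
    ∃ o k, orbitState n o k = chainSet n x y := by
  by_cases h : y - x ≤ n
  · refine ⟨.inl ⟨y - x - 1, by omega⟩, x, ?_⟩
    simp only [orbitState]
    rw [show x + (y - x - 1) + 1 = y by omega, Nat.mod_eq_of_lt (by omega), Nat.mod_eq_of_lt hy]
  · refine ⟨.inl ⟨2 * n - (y - x), by omega⟩, y, ?_⟩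
    simp only [orbitState]
    rw [show y + (2 * n - (y - x)) + 1 = x + (2 * n + 1) by omega, Nat.add_mod_right,
      Nat.mod_eq_of_lt hy, Nat.mod_eq_of_lt (by omega), chainSet_comm]

theorem exists_orbitState_eq (hn : 0 < n) {I : Set (Fin 2 × KType n)} (hI : IsLowerSet I) :
    ∃ o k, orbitState n o k = I := by
  obtain ⟨A, B, hA, hB, hBA, rfl⟩ := hI.exists_eq_pairSet
  rcases hA.eq_KL_or_eq_KN hn with ⟨a, ha, rfl⟩ | ⟨t, rfl⟩ <;>
    rcases hB.eq_KL_or_eq_KN hn with ⟨b, hb, rfl⟩ | ⟨t', rfl⟩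
  · rcases (le_of_KL_subset_KL hn hb ha hBA).eq_or_lt with rfl | hba
    · rw [← Nat.add_sub_cancel b 1, ← chainSet_zero_left]
      exact exists_orbitState_eq_chainSet (by omega) (by omega)
    · rw [← Nat.add_sub_cancel b 1, ← Nat.add_sub_cancel a 1,
        ← chainSet_of_pos_of_lt (by omega) (by omega)]
      exact exists_orbitState_eq_chainSet (by omega) (by omega)
  · have han := le_of_KN_subset_KL hn hBA
    refine ⟨.inr (parityTag (!t') a), a, ?_⟩
    simp only [orbitState, NSet, Nat.mod_eq_of_lt (show a < 2 * n + 1 by omega),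
      if_neg (show ¬a < n by omega), if_pos (show a < 2 * n by omega), parityTag_parityTag,
      Bool.not_not]
  · have hbn := lt_of_KL_subset_KN hn hb hBA
    refine ⟨.inr (parityTag t b), b, ?_⟩
    simp only [orbitState, NSet, Nat.mod_eq_of_lt (show b < 2 * n + 1 by omega), if_pos hbn,
      parityTag_parityTag]
  · obtain rfl := eq_of_KN_subset_KN hn hBA
    refine ⟨.inr (!t'), 2 * n, ?_⟩
    simp only [orbitState, NSet, Nat.mod_eq_of_lt (show 2 * n < 2 * n + 1 by omega),
      if_neg (show ¬2 * n < n by omega), lt_irrefl, if_false, Bool.not_not]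

theorem chainSet_inj (hn : 0 < n) {x y x' y' : ℕ} (hx : x < 2 * n + 1) (hy : y < 2 * n + 1)
    (hx' : x' < 2 * n + 1) (hy' : y' < 2 * n + 1) (hxy : x ≠ y) (hxy' : x' ≠ y')
    (h : chainSet n x y = chainSet n x' y') : x = x' ∧ y = y' ∨ x = y' ∧ y = x' := by
  obtain ⟨hA, hB⟩ := pairSet_inj.mp h
  have hA := KL_injOn hn (by omega) (by omega) hA
  have hB := KL_injOn hn (by split_ifs <;> omega) (by split_ifs <;> omega) hB
  split_ifs at hB <;> omega

theorem chainSet_ne_NSet (hn : 0 < n) {x y : ℕ} (hxy : max x y ≤ 2 * n) (s : Bool) (r : ℕ) :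
    chainSet n x y ≠ NSet n s r := by
  intro h
  simp only [chainSet, NSet] at h
  split_ifs at h <;> obtain ⟨hA, hB⟩ := pairSet_inj.mp h <;>
    first | exact KL_ne_KN hn (by omega) hA | exact KL_ne_KN hn (by omega) hB

theorem NSet_inj (hn : 0 < n) {s s' : Bool} {r r' : ℕ} (hr : r < 2 * n + 1)
    (hr' : r' < 2 * n + 1) (h : NSet n s r = NSet n s' r') : s = s' ∧ r = r' := by
  simp only [NSet] at h
  split_ifs at h <;> obtain ⟨hA, hB⟩ := pairSet_inj.mp h
  all_goals first
    | exact absurd hA (KL_ne_KN hn (by omega)) | exact absurd hA.symm (KL_ne_KN hn (by omega))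
    | exact absurd hB (KL_ne_KN hn (by omega)) | exact absurd hB.symm (KL_ne_KN hn (by omega))
    | skip
  · obtain rfl := KL_injOn hn (by omega) (by omega) hB
    exact ⟨parityTag_inj.mp (KN_injective hn hA), rfl⟩
  · obtain rfl := KL_injOn hn (by omega) (by omega) hA
    exact ⟨parityTag_inj.mp (Bool.not_inj (KN_injective hn hB)), rfl⟩
  · exact ⟨Bool.not_inj (KN_injective hn hA), by omega⟩
theorem orbitState_inj (hn : 0 < n) {o o' : Fin n ⊕ Bool} {k k' : ℕ} (hk : k < 2 * n + 1)
    (hk' : k' < 2 * n + 1) (h : orbitState n o k = orbitState n o' k') : o = o' ∧ k = k' := by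
  cases o with
  | inl d =>
    have hd := mod_ne_add_add_one_mod k (show d + 1 < 2 * n + 1 by omega)
    have hdm := Nat.mod_lt (k + d + 1) (show 0 < 2 * n + 1 by omega)
    cases o' with
    | inl d' =>
      have hd' := mod_ne_add_add_one_mod k' (show d' + 1 < 2 * n + 1 by omega)
      simp only [orbitState] at h
      have := chainSet_inj hn (Nat.mod_lt _ (by omega)) hdm (Nat.mod_lt _ (by omega))
        (Nat.mod_lt _ (by omega)) hd hd' h
      rw [Nat.mod_eq_of_lt hk, Nat.mod_eq_of_lt hk', mod_eq_ite (by omega),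
        mod_eq_ite (by omega)] at this
      refine ⟨congrArg Sum.inl (Fin.ext ?_), ?_⟩ <;> split_ifs at this <;> omega
    | inr s' =>
      have hkm := Nat.mod_lt k (show 0 < 2 * n + 1 by omega)
      exact absurd h (chainSet_ne_NSet hn (by omega) _ _)
  | inr s =>
    cases o' with
    | inl d' =>
      have hdm := Nat.mod_lt (k' + d' + 1) (show 0 < 2 * n + 1 by omega)
      have hkm := Nat.mod_lt k' (show 0 < 2 * n + 1 by omega)
      exact absurd h.symm (chainSet_ne_NSet hn (by omega) _ _)
    | inr s' =>
      simp only [orbitState, Nat.mod_eq_of_lt hk, Nat.mod_eq_of_lt hk'] at h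
      obtain ⟨rfl, rfl⟩ := NSet_inj hn hk hk' h
      exact ⟨rfl, rfl⟩

theorem ncard_chainSet_eq_iff (hn : 0 < n) {x y : ℕ} (hx : x < 2 * n + 1) (hy : y < 2 * n + 1)
    (hxy : x ≠ y) : (chainSet n x y).ncard = 2 * n ↔ x + y = 2 * n + 1 := by
  wlog h : x < y generalizing x y
  · rw [chainSet_comm, this hy hx hxy.symm (by omega), Nat.add_comm]
  rcases Nat.eq_zero_or_pos x with rfl | hx0
  · rw [chainSet_zero_left, ncard_pairSet, ncard_KL hn (by omega)]
    split_ifs <;> omega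
  · rw [chainSet_of_pos_of_lt hx0 h, ncard_pairSet, ncard_KL hn (by omega),
      ncard_KL hn (by omega)]
    split_ifs <;> omega

theorem ncard_NSet_eq_iff (hn : 0 < n) (s : Bool) {r : ℕ} (hr : r < 2 * n + 1) :
    (NSet n s r).ncard = 2 * n ↔ r = 2 * n := by
  simp only [NSet]
  split_ifs with h₁ h₂
  · rw [ncard_pairSet, ncard_KN hn, ncard_KL hn (by omega), if_pos h₁]
    omega
  · rw [ncard_pairSet, ncard_KN hn, ncard_KL hn (by omega), if_neg h₁]
    omega
  · rw [ncard_pairSet, ncard_KN hn]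
    omega

theorem existsUnique_ncard_orbitState (hn : 0 < n) (o : Fin n ⊕ Bool) :
    ∃! k, k < 2 * n + 1 ∧ (orbitState n o k).ncard = 2 * n := by
  cases o with
  | inl d =>
    obtain ⟨d, hd⟩ := d
    have key : ∀ k < 2 * n + 1, (orbitState n (.inl ⟨d, hd⟩) k).ncard = 2 * n ↔
        k + (if k + d + 1 < 2 * n + 1 then k + d + 1 else k + d + 1 - (2 * n + 1)) = 2 * n + 1 := by
      intro k hk
      simp only [orbitState, Nat.mod_eq_of_lt hk]
      rw [ncard_chainSet_eq_iff hn hk (Nat.mod_lt _ (by omega))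
        (by rw [Nat.add_assoc]; exact ne_add_mod hk (by omega) (by omega)),
        mod_eq_ite (a := k + d + 1) (by omega)]
    have hwit : ∃ k < 2 * n + 1, (orbitState n (.inl ⟨d, hd⟩) k).ncard = 2 * n := by
      by_cases hpar : d % 2 = 0
      · exact ⟨n - d / 2, by omega, (key _ (by omega)).mpr (by split_ifs <;> omega)⟩
      · exact ⟨2 * n + 1 - (d + 1) / 2, by omega, (key _ (by omega)).mpr (by split_ifs <;> omega)⟩
    obtain ⟨k₀, hk₀, hcard₀⟩ := hwit
    refine ⟨k₀, ⟨hk₀, hcard₀⟩, fun k ⟨hk, hcard⟩ => ?_⟩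
    have h₁ := (key k hk).mp hcard
    have h₀ := (key k₀ hk₀).mp hcard₀
    split_ifs at h₀ h₁ <;> omega
  | inr s =>
    refine ⟨2 * n, ⟨by omega, ?_⟩, fun k ⟨hk, hcard⟩ => ?_⟩
    · simp only [orbitState, Nat.mod_eq_of_lt (show 2 * n < 2 * n + 1 by omega)]
      exact (ncard_NSet_eq_iff hn s (by omega)).mpr rfl
    · simp only [orbitState, Nat.mod_eq_of_lt hk] at hcard
      exact (ncard_NSet_eq_iff hn s hk).mp hcard

theorem range_orbitState_eq_image (o : Fin n ⊕ Bool) :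
    Set.range (orbitState n o) = orbitState n o '' ↑(Finset.range (2 * n + 1)) := by
  refine (Set.image_subset_range _ _).antisymm' ?_
  rintro _ ⟨k, rfl⟩
  exact ⟨k % (2 * n + 1), Finset.mem_coe.mpr (Finset.mem_range.mpr (Nat.mod_lt _ (by omega))),
    orbitState_mod o k⟩

theorem ncard_range_orbitState (hn : 0 < n) (o : Fin n ⊕ Bool) :
    (Set.range (orbitState n o)).ncard = 2 * n + 1 := by
  rw [range_orbitState_eq_image, Set.InjOn.ncard_image, Set.ncard_coe_finset, Finset.card_range]
  intro k hk k' hk' h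
  simp only [Finset.coe_range, Set.mem_Iio] at hk hk'
  exact (orbitState_inj hn hk hk' h).2

theorem range_orbitState_injective (hn : 0 < n) :
    Function.Injective fun o => Set.range (orbitState n o) := by
  intro o o' (h : Set.range (orbitState n o) = Set.range (orbitState n o'))
  obtain ⟨k, hk⟩ : orbitState n o 0 ∈ Set.range (orbitState n o') := h ▸ ⟨0, rfl⟩
  rw [← orbitState_mod] at hk
  exact (orbitState_inj hn (Nat.mod_lt _ (by omega)) (by omega) hk).1.symm

theorem existsUnique_mem_range_orbitState_ncard (hn : 0 < n) (o : Fin n ⊕ Bool) :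
    ∃! J, J ∈ Set.range (orbitState n o) ∧ J.ncard = 2 * n := by
  obtain ⟨k, ⟨-, hcard⟩, huniq⟩ := existsUnique_ncard_orbitState hn o
  refine ⟨orbitState n o k, ⟨⟨k, rfl⟩, hcard⟩, ?_⟩
  rintro _ ⟨⟨i, rfl⟩, hJ⟩
  rw [← orbitState_mod] at hJ ⊢
  rw [huniq _ ⟨Nat.mod_lt _ (by omega), hJ⟩]

end KLowerSets

/-- For `P = [2] × K_{n-1}` (Δ(1) for the extra-special grading of `D_{n+2}`),
the reverse operator `𝔛` on the lower sets of `P` has exactly `n+2` orbits,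
each orbit has exactly `2n+1` elements, and each orbit contains exactly one
lower set of cardinality `2n`. -/
theorem stmt10 (n : ℕ) (hn : 2 ≤ n) :
    Set.ncard {O : Set (Set (Fin 2 × KType n)) |
        ∃ I : Set (Fin 2 × KType n), IsLowerSet I ∧ O = XOrbit I} = n + 2 ∧
      ∀ I : Set (Fin 2 × KType n), IsLowerSet I →
        (XOrbit I).ncard = 2 * n + 1 ∧
          (∃! J : Set (Fin 2 × KType n), J ∈ XOrbit I ∧ J.ncard = 2 * n) := by
  replace hn : 0 < n := by omega
  have horbit : ∀ I, IsLowerSet I → ∃ o, XOrbit I = Set.range (orbitState n o) := fun I hI => by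
    obtain ⟨o, k, rfl⟩ := exists_orbitState_eq hn hI
    exact ⟨o, XOrbit_orbitState hn o k⟩
  refine ⟨?_, fun I hI => ?_⟩
  · have horbits : {O | ∃ I, IsLowerSet I ∧ O = XOrbit I} =
        Set.range fun o => Set.range (orbitState n o) := by
      ext O
      constructor
      · rintro ⟨I, hI, rfl⟩
        obtain ⟨o, ho⟩ := horbit I hI
        exact ⟨o, ho.symm⟩
      · rintro ⟨o, rfl⟩
        exact ⟨_, isLowerSet_orbitState hn o 0, (XOrbit_orbitState hn o 0).symm⟩
    rw [horbits, Set.ncard_range_of_injective (range_orbitState_injective hn)]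
    simp
  · obtain ⟨o, ho⟩ := horbit I hI
    rw [ho]
    exact ⟨ncard_range_orbitState hn o, existsUnique_mem_range_orbitState_ncard hn o⟩
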